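/- Let G be a connected locally finite graph, let V_0 be a finite subset of its vertices inducing a connected subgraph G_0, and let v_0 be a vertex in V_0. Let bar(G_0) denote the closure of G_0 in G, i.e. the subgraph induced on V_0 together with all vertices of G having a neighbour in V_0, and let |bar(G_0)| be its number of edges. For v in V_0 let sigma_v^out be the number of neighbours of v in G outside V_0. Define C_{G,G_0}(n; v_0) = sigma_{v_0} * sum over vertices v in V_0 with sigma_v^out > 0 of sigma_v^{-1} * sigma_v^out * (sum over all walks omega from v_0 to v of length at most n whose vertices all lie in V_0 and which do not return to v_0 after the initial step of p_G(omega)). Then for every positive integer n, Q_G(n; v_0, v_0) >= sigma_{v_0} * ( 2|bar(G_0)|/(n+1) + C_{G,G_0}(n; v_0) )^{-1}. -/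

import Mathlib

/-!
Cut every walk of length at most `n` from `v₀` at its last visit to `v₀`: a closed walk counted
by `Q(n; v₀, v₀)` followed by a walk that never returns to `v₀`. The walks of each fixed length
from a vertex of positive degree have total weight one, so `n + 1 ≤ Q(n; v₀, v₀) · A`, where `A`
is the weight of the non-returning walks of length at most `n`. Such a walk either stays in `V₀`
or leaves it. By reversibility, `σ_{v₀} p(ω) = σ_u p(ω⁻¹)`, and the reversed walks are
first-passage walks to `v₀`, whose total weight is at most one; so the walks staying in `V₀`
contribute at most `∑_{u ∈ V₀} σ_u / σ_{v₀} ≤ 2|bar G₀| / σ_{v₀}`. A walk that leaves `V₀` does so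
for the first time along an edge from some `v` to a neighbour outside `V₀`, and after that it
continues as an arbitrary walk of length at most `n`, of total weight `n + 1`; this bounds their
contribution by `(n + 1) C_{G,G₀}(n; v₀) / σ_{v₀}`.
-/

open scoped ENNReal

variable {V : Type*}

/-- Weight of a walk: product over all vertices except the last of the inverse degree. -/
noncomputable def wgt (G : SimpleGraph V) [G.LocallyFinite] {v u : V} (p : G.Walk v u) : ℝ≥0∞ :=
  (p.support.dropLast.map fun x => ((G.degree x : ℝ≥0∞))⁻¹).prod

/-- Cumulative probability: sum of weights of walks from `v` to `u` of length at most `n`. -/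
noncomputable def Q (G : SimpleGraph V) [G.LocallyFinite] (n : ℕ) (v u : V) : ℝ≥0∞ :=
  ∑' ω : {ω : G.Walk v u // ω.length ≤ n}, wgt G ω.1

/-- Vertex set of the closure `bar G₀` of the subgraph induced on `V₀`: the vertices of `V₀`
together with all vertices of `G` having a neighbour in `V₀`. -/
def closureSet (G : SimpleGraph V) (V₀ : Set V) : Set V :=
  V₀ ∪ {x | ∃ v ∈ V₀, G.Adj v x}

/-- Number of edges of the subgraph of `G` induced on the closure of `V₀`. -/
noncomputable def closureEdgeCount (G : SimpleGraph V) (V₀ : Set V) : ℕ :=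
  {e ∈ G.edgeSet | ∀ x ∈ e, x ∈ closureSet G V₀}.ncard

/-- The truncated conductance `C_{G,G₀}(n; v₀)`: `σ_{v₀}` times the probability that a walk
started at `v₀` reaches the inner boundary of `G₀` within `n` steps, staying inside `V₀`,
without returning to `v₀`. -/
noncomputable def conductance (G : SimpleGraph V) [G.LocallyFinite] (V₀ : Set V) (n : ℕ)
    (v₀ : V) : ℝ≥0∞ :=
  (G.degree v₀ : ℝ≥0∞) *
    ∑' v : {v : V // v ∈ V₀ ∧ 0 < {x | G.Adj v x ∧ x ∉ V₀}.ncard},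
      ((G.degree (v : V) : ℝ≥0∞))⁻¹ * ({x | G.Adj (v : V) x ∧ x ∉ V₀}.ncard : ℝ≥0∞) *
        ∑' ω : {ω : G.Walk v₀ (v : V) //
            ω.length ≤ n ∧ (∀ x ∈ ω.support, x ∈ V₀) ∧ v₀ ∉ ω.support.tail},
          wgt G ω.1

open SimpleGraph

lemma tsum_subtype_le_tsum_comp {α β : Type*} {P : β → Prop} (f : α → β)
    (hf : ∀ b, P b → ∃ a, f a = b) (g : β → ℝ≥0∞) :
    ∑' b : {b // P b}, g b ≤ ∑' a, g (f a) :=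
  calc ∑' b : {b // P b}, g b ≤ ∑' b : Set.range f, g b :=
        ENNReal.tsum_mono_subtype g fun b hb => hf b hb
    _ ≤ ∑' a, g (f a) := ENNReal.tsum_le_tsum_comp_of_surjective Set.rangeFactorization_surjective _

namespace SimpleGraph.Walk

variable {G : SimpleGraph V}

lemma exists_eq_append_of_mem_support {u v w : V} (p : G.Walk u w) (h : v ∈ p.support) :
    ∃ (q : G.Walk u v) (r : G.Walk v w), p = q.append r ∧ v ∉ r.support.tail := by
  induction p with
  | nil =>
    obtain rfl : v = _ := by simpa using h
    exact ⟨.nil, .nil, rfl, by simp⟩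
  | cons hadj p ih =>
    by_cases hv : v ∈ p.support
    · obtain ⟨q, r, rfl, hr⟩ := ih hv
      exact ⟨.cons hadj q, r, rfl, hr⟩
    · obtain rfl : v = _ := by simpa [hv] using h
      exact ⟨.nil, .cons hadj p, rfl, by simpa using hv⟩

lemma exists_eq_append_cons_of_not_forall_mem {S : Set V} {u w : V} (p : G.Walk u w)
    (hu : u ∈ S) (hp : ¬∀ x ∈ p.support, x ∈ S) :
    ∃ (v x : V) (h : G.Adj v x) (q : G.Walk u v) (r : G.Walk x w),
      p = q.append (.cons h r) ∧ (∀ y ∈ q.support, y ∈ S) ∧ x ∉ S := by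
  induction p with
  | nil => simp [hu] at hp
  | @cons u y w hadj p ih =>
    by_cases hy : y ∈ S
    · obtain ⟨v, x, h, q, r, rfl, hq, hx⟩ := ih hy (by simpa [hu] using hp)
      exact ⟨v, x, h, .cons hadj q, r, rfl, by simpa [hu] using hq, hx⟩
    · exact ⟨u, y, hadj, .nil, p, rfl, by simpa using hu, hy⟩

def sigmaEquivFirstStep (u : V) :
    (Σ w, G.Walk u w) ≃ Unit ⊕ Σ x : {x // G.Adj u x}, Σ w, G.Walk x w where
  toFun
    | ⟨_, .nil⟩ => .inl ()
    | ⟨w, .cons h p⟩ => .inr ⟨⟨_, h⟩, w, p⟩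
  invFun
    | .inl _ => ⟨u, .nil⟩
    | .inr ⟨x, w, p⟩ => ⟨w, .cons x.2 p⟩
  left_inv := by rintro ⟨_, _ | _⟩ <;> rfl
  right_inv := by rintro (_ | ⟨⟨_, _⟩, _, _⟩) <;> rfl

end SimpleGraph.Walk

section

variable {G : SimpleGraph V} [G.LocallyFinite]

@[simp] lemma wgt_nil {v : V} : wgt G (Walk.nil : G.Walk v v) = 1 := by
  simp [wgt]

@[simp] lemma wgt_cons {u v w : V} (h : G.Adj u v) (p : G.Walk v w) :
    wgt G (.cons h p) = (G.degree u : ℝ≥0∞)⁻¹ * wgt G p := by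
  simp [wgt, List.dropLast_cons_of_ne_nil p.support_ne_nil]

lemma wgt_append {u v w : V} (p : G.Walk u v) (q : G.Walk v w) :
    wgt G (p.append q) = wgt G p * wgt G q := by
  induction p with
  | nil => simp
  | cons h p ih => simp [ih, mul_assoc]

lemma degree_mul_wgt_eq_degree_mul_wgt_reverse {u v : V} (p : G.Walk u v) :
    G.degree u * wgt G p = G.degree v * wgt G p.reverse := by
  induction p with
  | nil => simp
  | @cons u x v h p ih =>
    have hu : (G.degree u : ℝ≥0∞) ≠ 0 := by
      exact_mod_cast ((G.degree_pos_iff_exists_adj u).2 ⟨x, h⟩).ne'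
    have hx : (G.degree x : ℝ≥0∞) ≠ 0 := by
      exact_mod_cast ((G.degree_pos_iff_exists_adj x).2 ⟨u, h.symm⟩).ne'
    rw [wgt_cons, Walk.reverse_cons, wgt_append, wgt_cons, wgt_nil, mul_one, ← mul_assoc,
      ENNReal.mul_inv_cancel hu (by simp), one_mul, ← mul_assoc, ← ih, mul_comm,
      ← mul_assoc, ENNReal.inv_mul_cancel hx (by simp), one_mul]

variable (G) in
noncomputable def walkMass (v : V) (S : Set (Σ u, G.Walk v u)) : ℝ≥0∞ :=
  ∑' p : S, wgt G p.1.2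

lemma walkMass_eq_tsum_indicator (v : V) (S : Set (Σ u, G.Walk v u)) :
    walkMass G v S = ∑' p, S.indicator (fun p => wgt G p.2) p :=
  tsum_subtype S (fun p => wgt G p.2)

lemma walkMass_le_inter_add_diff {v : V} (S T : Set (Σ u, G.Walk v u)) :
    walkMass G v S ≤ walkMass G v (S ∩ T) + walkMass G v (S \ T) := by
  conv_lhs => rw [← Set.inter_union_sdiff S T]
  exact ENNReal.tsum_union_le (fun p : Σ u, G.Walk v u => wgt G p.2) _ _

open Classical in
lemma walkMass_eq_first_step (u : V) (S : Set (Σ w, G.Walk u w)) :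
    walkMass G u S = (if ⟨u, .nil⟩ ∈ S then 1 else 0) + (G.degree u : ℝ≥0∞)⁻¹ *
      ∑' x : {x // G.Adj u x}, walkMass G x ((fun p => ⟨p.1, .cons x.2 p.2⟩) ⁻¹' S) := by
  simp only [walkMass_eq_tsum_indicator]
  rw [← (Walk.sigmaEquivFirstStep u).symm.tsum_eq,
    Summable.tsum_sum ENNReal.summable ENNReal.summable]
  simp [Walk.sigmaEquivFirstStep, Set.indicator_apply, ENNReal.tsum_sigma',
    ← ENNReal.tsum_mul_left, mul_ite]

lemma tsum_adj_const (v : V) (c : ℝ≥0∞) :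
    ∑' _ : {x // G.Adj v x}, c = G.degree v * c := by
  change ∑' _ : G.neighborSet v, c = _
  rw [tsum_fintype, Finset.sum_const, Finset.card_univ, card_neighborSet_eq_degree, nsmul_eq_mul]

lemma walkMass_length_le {v : V} (hv : 0 < G.degree v) (n : ℕ) :
    walkMass G v {p | p.2.length ≤ n} = n + 1 := by
  induction n generalizing v with
  | zero =>
    rw [walkMass_eq_first_step]
    simp [walkMass]
  | succ n ih =>
    rw [walkMass_eq_first_step]
    simp only [Set.preimage_ofPred_eq, Walk.length_cons, add_le_add_iff_right, Set.mem_ofPred_eq,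
      Walk.length_nil, zero_le, if_true]
    have hx (x : {x // G.Adj v x}) : 0 < G.degree x :=
      (G.degree_pos_iff_exists_adj x).2 ⟨v, x.2.symm⟩
    rw [tsum_congr fun x => ih (hx x), tsum_adj_const, ← mul_assoc,
      ENNReal.inv_mul_cancel (by exact_mod_cast hv.ne') (by simp), one_mul, add_comm]
    push_cast
    ring

lemma walkMass_length_le_le_Q_mul (v₀ : V) (n : ℕ) :
    walkMass G v₀ {p | p.2.length ≤ n} ≤
      Q G n v₀ v₀ * walkMass G v₀ {p | p.2.length ≤ n ∧ v₀ ∉ p.2.support.tail} := by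
  set S : Set (Σ u, G.Walk v₀ u) := {p | p.2.length ≤ n ∧ v₀ ∉ p.2.support.tail}
  let f : {ρ : G.Walk v₀ v₀ // ρ.length ≤ n} × S → Σ u, G.Walk v₀ u :=
    fun a => ⟨a.2.1.1, a.1.1.append a.2.1.2⟩
  calc walkMass G v₀ {p | p.2.length ≤ n} ≤ ∑' a, wgt G (f a).2 := by
        refine tsum_subtype_le_tsum_comp f ?_ (fun p => wgt G p.2)
        rintro ⟨u, p⟩ hp
        obtain ⟨q, r, rfl, hr⟩ := p.exists_eq_append_of_mem_support p.start_mem_support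
        simp only [Set.mem_ofPred_eq, Walk.length_append] at hp
        exact ⟨(⟨q, by omega⟩, ⟨⟨u, r⟩, show r.length ≤ n by omega, hr⟩), rfl⟩
    _ = Q G n v₀ v₀ * walkMass G v₀ S := by
        simp only [f, wgt_append, ENNReal.tsum_prod', Q, walkMass, ENNReal.tsum_mul_left,
          ENNReal.tsum_mul_right]

lemma walkMass_firstPassage_le_one (v₀ : V) (n : ℕ) (u : V) :
    walkMass G u {p | p.1 = v₀ ∧ p.2.length ≤ n ∧ v₀ ∉ p.2.support.dropLast} ≤ 1 := by
  induction n generalizing u with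
  | zero =>
    rw [walkMass_eq_first_step]
    simp only [walkMass]
    split_ifs <;> simp
  | succ n ih =>
    rw [walkMass_eq_first_step]
    by_cases hu : u = v₀
    · subst hu
      simp [walkMass, List.dropLast_cons_of_ne_nil]
    · simp only [hu, Ne.symm hu, Set.mem_ofPred_eq, Set.preimage_ofPred_eq, Walk.length_cons,
        Walk.support_cons, List.dropLast_cons_of_ne_nil (Walk.support_ne_nil _),
        add_le_add_iff_right, List.mem_cons, false_and, false_or, if_false, zero_add]
      calc (G.degree u : ℝ≥0∞)⁻¹ * ∑' x : {x // G.Adj u x}, walkMass G x _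
          ≤ (G.degree u : ℝ≥0∞)⁻¹ * ∑' _ : {x // G.Adj u x}, 1 := by
            gcongr with x
            exact ih x
        _ ≤ 1 := by rw [tsum_adj_const, mul_one]; exact ENNReal.inv_mul_le_one _

lemma degree_mul_tsum_wgt_avoiding_le (v₀ u : V) (n : ℕ) :
    G.degree v₀ * ∑' t : {t : G.Walk v₀ u // t.length ≤ n ∧ v₀ ∉ t.support.tail}, wgt G t.1 ≤
      G.degree u := by
  let g : {t : G.Walk v₀ u // t.length ≤ n ∧ v₀ ∉ t.support.tail} →
      {p : Σ w, G.Walk u w | p.1 = v₀ ∧ p.2.length ≤ n ∧ v₀ ∉ p.2.support.dropLast} :=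
    fun t => ⟨⟨v₀, t.1.reverse⟩, rfl, by simpa using t.2.1, by simpa using t.2.2⟩
  have hg : Function.Injective g := by
    rintro ⟨t, ht⟩ ⟨t', ht'⟩ h
    simpa using Walk.reverse_injective (by simpa [g] using h : t.reverse = t'.reverse)
  calc G.degree v₀ * ∑' t : {t : G.Walk v₀ u // t.length ≤ n ∧ v₀ ∉ t.support.tail}, wgt G t.1
      = G.degree u * ∑' t, wgt G (g t).1.2 := by
        rw [← ENNReal.tsum_mul_left, ← ENNReal.tsum_mul_left]
        exact tsum_congr fun t => degree_mul_wgt_eq_degree_mul_wgt_reverse t.1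
    _ ≤ G.degree u * walkMass G u {p | p.1 = v₀ ∧ p.2.length ≤ n ∧ v₀ ∉ p.2.support.dropLast} := by
        gcongr
        exact ENNReal.tsum_comp_le_tsum_of_injective hg (fun p => wgt G p.1.2)
    _ ≤ G.degree u := mul_le_of_le_one_right' (walkMass_firstPassage_le_one v₀ n u)

lemma degree_mul_walkMass_inside_le {V₀ : Set V} (hfin : V₀.Finite) (v₀ : V) (n : ℕ) :
    G.degree v₀ * walkMass G v₀ ({p | p.2.length ≤ n ∧ v₀ ∉ p.2.support.tail} ∩
      {p | ∀ x ∈ p.2.support, x ∈ V₀}) ≤ ∑ u ∈ hfin.toFinset, (G.degree u : ℝ≥0∞) := by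
  let f : (Σ u : hfin.toFinset, {t : G.Walk v₀ u // t.length ≤ n ∧ v₀ ∉ t.support.tail}) →
      Σ u, G.Walk v₀ u := fun a => ⟨a.1, a.2.1⟩
  calc _ ≤ G.degree v₀ * ∑' a, wgt G (f a).2 := by
        gcongr
        refine tsum_subtype_le_tsum_comp f ?_ (fun p => wgt G p.2)
        rintro ⟨u, t⟩ ⟨ht, hV₀⟩
        exact ⟨⟨⟨u, by simpa using hV₀ u t.end_mem_support⟩, t, ht⟩, rfl⟩
    _ = ∑' u : hfin.toFinset, G.degree v₀ *
          ∑' t : {t : G.Walk v₀ u // t.length ≤ n ∧ v₀ ∉ t.support.tail}, wgt G t.1 := by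
        rw [ENNReal.tsum_sigma', ← ENNReal.tsum_mul_left]
    _ ≤ ∑' u : hfin.toFinset, (G.degree u : ℝ≥0∞) :=
        ENNReal.tsum_le_tsum fun u => degree_mul_tsum_wgt_avoiding_le v₀ u n
    _ = ∑ u ∈ hfin.toFinset, (G.degree u : ℝ≥0∞) :=
        Finset.tsum_subtype hfin.toFinset fun u => (G.degree u : ℝ≥0∞)

lemma tsum_adj_notMem_const (V₀ : Set V) (v : V) (c : ℝ≥0∞) :
    ∑' _ : {x // G.Adj v x ∧ x ∉ V₀}, c = {x | G.Adj v x ∧ x ∉ V₀}.ncard * c := by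
  have hfin : {x | G.Adj v x ∧ x ∉ V₀}.Finite :=
    (G.neighborSet v).toFinite.subset fun _ hx => hx.1
  change ∑' _ : ({x | G.Adj v x ∧ x ∉ V₀} : Set V), c = _
  rw [ENNReal.tsum_set_const, ← hfin.cast_ncard_eq, ENat.toENNReal_coe]

lemma degree_mul_walkMass_exiting_le {V₀ : Set V} {v₀ : V} (hv₀ : v₀ ∈ V₀) (n : ℕ) :
    G.degree v₀ * walkMass G v₀ ({p | p.2.length ≤ n ∧ v₀ ∉ p.2.support.tail} \
      {p | ∀ x ∈ p.2.support, x ∈ V₀}) ≤ conductance G V₀ n v₀ * (n + 1) := by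
  let f : (Σ (v : {v : V // v ∈ V₀ ∧ 0 < {x | G.Adj v x ∧ x ∉ V₀}.ncard})
      (ω : {ω : G.Walk v₀ v // ω.length ≤ n ∧ (∀ x ∈ ω.support, x ∈ V₀) ∧ v₀ ∉ ω.support.tail})
      (x : {x // G.Adj v x ∧ x ∉ V₀}), ({q | q.2.length ≤ n} : Set (Σ u, G.Walk x u))) →
      Σ u, G.Walk v₀ u :=
    fun a => ⟨a.2.2.2.1.1, a.2.1.1.append (.cons a.2.2.1.2.1 a.2.2.2.1.2)⟩
  calc _ ≤ G.degree v₀ * ∑' a, wgt G (f a).2 := by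
        gcongr
        refine tsum_subtype_le_tsum_comp f ?_ (fun p => wgt G p.2)
        rintro ⟨u, t⟩ ⟨⟨hlen, hret⟩, hout⟩
        obtain ⟨v, x, h, q, r, rfl, hq, hx⟩ := t.exists_eq_append_cons_of_not_forall_mem hv₀ hout
        simp only [Walk.length_append, Walk.length_cons] at hlen
        rw [Walk.tail_support_append, List.mem_append, not_or] at hret
        have hpos : 0 < {y | G.Adj v y ∧ y ∉ V₀}.ncard :=
          (Set.ncard_pos ((G.neighborSet v).toFinite.subset fun _ hy => hy.1)).2 ⟨x, h, hx⟩
        exact ⟨⟨⟨v, hq v q.end_mem_support, hpos⟩, ⟨q, by omega, hq, hret.1⟩, ⟨x, h, hx⟩,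
          ⟨⟨u, r⟩, show r.length ≤ n by omega⟩⟩, rfl⟩
    _ = conductance G V₀ n v₀ * (n + 1) := by
        rw [conductance, mul_assoc, ← ENNReal.tsum_mul_right]
        congr 1
        simp only [f, ENNReal.tsum_sigma', wgt_append, wgt_cons]
        refine tsum_congr fun v => ?_
        have hx (x : {x // G.Adj v x ∧ x ∉ V₀}) :
            ∑' q : ({q | q.2.length ≤ n} : Set (Σ u, G.Walk x u)), wgt G q.1.2 = n + 1 :=
          walkMass_length_le ((G.degree_pos_iff_exists_adj x).2 ⟨v, x.2.1.symm⟩) n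
        have hω (ω : {ω : G.Walk v₀ v // ω.length ≤ n ∧ (∀ x ∈ ω.support, x ∈ V₀) ∧
            v₀ ∉ ω.support.tail}) :
            ∑' (x : {x // G.Adj v x ∧ x ∉ V₀}) (q : ({q | q.2.length ≤ n} : Set (Σ u, G.Walk x u))),
              wgt G ω.1 * ((G.degree v : ℝ≥0∞)⁻¹ * wgt G q.1.2) =
            {x | G.Adj v x ∧ x ∉ V₀}.ncard * (wgt G ω.1 * ((G.degree v : ℝ≥0∞)⁻¹ * (n + 1))) := by
          rw [← tsum_adj_notMem_const]
          exact tsum_congr fun x => by rw [ENNReal.tsum_mul_left, ENNReal.tsum_mul_left, hx]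
        rw [tsum_congr hω, ENNReal.tsum_mul_left, ENNReal.tsum_mul_right]
        ring

lemma closureSet_finite {V₀ : Set V} (hfin : V₀.Finite) : (closureSet G V₀).Finite :=
  hfin.union <| (hfin.biUnion fun v _ => (G.neighborSet v).toFinite).subset
    fun _ ⟨_, hv, h⟩ => Set.mem_biUnion hv h

lemma sum_degree_le_two_mul_closureEdgeCount {V₀ : Set V} (hfin : V₀.Finite) :
    ∑ u ∈ hfin.toFinset, G.degree u ≤ 2 * closureEdgeCount G V₀ := by
  classical
  have hE : {e ∈ G.edgeSet | ∀ x ∈ e, x ∈ closureSet G V₀}.Finite :=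
    (closureSet_finite (G := G) hfin).toFinset.sym2.finite_toSet.subset
      fun _ he => Finset.mem_sym2_iff.2 fun x hx => (Set.Finite.mem_toFinset _).2 (he.2 x hx)
  calc ∑ u ∈ hfin.toFinset, G.degree u
      = (hfin.toFinset.sigma fun u => G.neighborFinset u).card := by simp [Finset.card_sigma]
    _ ≤ 2 * hE.toFinset.card := by
        refine Finset.card_le_mul_card_image_of_maps_to (f := fun d => s(d.1, d.2)) ?_ 2 ?_
        · rintro ⟨u, x⟩ hd
          simp only [Finset.mem_sigma, Set.Finite.mem_toFinset, mem_neighborFinset] at hd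
          refine hE.mem_toFinset.2 ⟨hd.2, ?_⟩
          intro y hy
          rcases Sym2.mem_iff.1 hy with rfl | rfl
          exacts [Or.inl hd.1, Or.inr ⟨u, hd.1, hd.2⟩]
        · intro e _
          calc ({d ∈ hfin.toFinset.sigma fun u => G.neighborFinset u | s(d.1, d.2) = e}).card
                ≤ e.toFinset.card := by
                refine Finset.card_le_card_of_injOn Sigma.fst ?_ ?_
                · rintro ⟨u, x⟩ hd
                  simp only [Finset.mem_coe, Finset.mem_filter] at hd
                  simp [← hd.2]
                · rintro ⟨u, x⟩ hd ⟨u', x'⟩ hd' (rfl : u = u')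
                  simp only [Finset.mem_coe, Finset.mem_filter] at hd hd'
                  have : x = x' := Sym2.congr_right.1 (hd.2.trans hd'.2.symm)
                  subst this
                  rfl
            _ ≤ 2 := by rw [Sym2.card_toFinset]; split_ifs <;> norm_num
    _ = 2 * closureEdgeCount G V₀ := by rw [closureEdgeCount, Set.ncard_eq_toFinset_card _ hE]

end

lemma mul_inv_div_add_le_of_mul_le {σ N q a c : ℝ≥0∞} (hN₀ : N ≠ 0) (hN : N ≠ ∞)
    (h : σ * N ≤ q * (a + c * N)) : σ * (a / N + c)⁻¹ ≤ q := by
  rw [← div_eq_mul_inv]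
  refine ENNReal.div_le_of_le_mul ?_
  calc σ = σ * N * N⁻¹ := (ENNReal.mul_inv_cancel_right hN₀ hN).symm
    _ ≤ q * (a + c * N) * N⁻¹ := by gcongr
    _ = q * (a / N + c) := by
      rw [mul_assoc, add_mul, mul_assoc c, ENNReal.mul_inv_cancel hN₀ hN, mul_one, div_eq_mul_inv]

theorem Q_lower_bound_general (G : SimpleGraph V) [G.LocallyFinite]
    (V₀ : Set V) (hfin : V₀.Finite)
    (v₀ : V) (hv₀ : v₀ ∈ V₀) (n : ℕ) :
    (G.degree v₀ : ℝ≥0∞) *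
        (2 * (closureEdgeCount G V₀ : ℝ≥0∞) / ((n : ℝ≥0∞) + 1) + conductance G V₀ n v₀)⁻¹ ≤
      Q G n v₀ v₀ := by
  rcases Nat.eq_zero_or_pos (G.degree v₀) with hσ | hσ
  · simp [hσ]
  set A : Set (Σ u, G.Walk v₀ u) := {p | p.2.length ≤ n ∧ v₀ ∉ p.2.support.tail}
  set T : Set (Σ u, G.Walk v₀ u) := {p | ∀ x ∈ p.2.support, x ∈ V₀}
  have hreturn : (n + 1 : ℝ≥0∞) ≤ Q G n v₀ v₀ * walkMass G v₀ A :=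
    walkMass_length_le hσ n ▸ walkMass_length_le_le_Q_mul v₀ n
  have hinside : G.degree v₀ * walkMass G v₀ (A ∩ T) ≤ 2 * closureEdgeCount G V₀ :=
    (degree_mul_walkMass_inside_le hfin v₀ n).trans
      (by exact_mod_cast sum_degree_le_two_mul_closureEdgeCount hfin)
  have hexit : G.degree v₀ * walkMass G v₀ (A \ T) ≤ conductance G V₀ n v₀ * (n + 1) :=
    degree_mul_walkMass_exiting_le hv₀ n
  refine mul_inv_div_add_le_of_mul_le (by positivity) (by simp) ?_
  calc G.degree v₀ * (n + 1) ≤ G.degree v₀ * (Q G n v₀ v₀ * walkMass G v₀ A) := by gcongr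
    _ ≤ Q G n v₀ v₀ * (G.degree v₀ * walkMass G v₀ (A ∩ T) +
          G.degree v₀ * walkMass G v₀ (A \ T)) := by
      rw [mul_left_comm, ← mul_add]
      gcongr
      exact walkMass_le_inter_add_diff A T
    _ ≤ Q G n v₀ v₀ * (2 * closureEdgeCount G V₀ + conductance G V₀ n v₀ * (n + 1)) := by
      gcongr

/-- Lower bound on the cumulative return probability (Theorem 1 of the paper):
`Q(n; v₀, v₀) ≥ σ_{v₀} (2|bar G₀|/(n+1) + C_{G,G₀}(n; v₀))⁻¹` for a finite connected
induced subgraph `G₀` of a connected locally finite graph `G` containing `v₀`. -/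
theorem Q_lower_bound (G : SimpleGraph V) [G.LocallyFinite] (hG : G.Connected)
    (V₀ : Set V) (hfin : V₀.Finite) (hconn : (G.induce V₀).Connected)
    (v₀ : V) (hv₀ : v₀ ∈ V₀) (n : ℕ) (hn : 0 < n) :
    (G.degree v₀ : ℝ≥0∞) *
        (2 * (closureEdgeCount G V₀ : ℝ≥0∞) / ((n : ℝ≥0∞) + 1) + conductance G V₀ n v₀)⁻¹ ≤
      Q G n v₀ v₀ :=
  Q_lower_bound_general G V₀ hfin v₀ hv₀ n
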